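/- Let N ≥ 1 be an integer, n > 0 a real number, R > 0, K ≥ 0, γ > 1, T > 0, and let δ ∈ {0, 1}. Suppose ρ, V : [0,T] × [0,∞) → ℝ are C¹ functions such that: (i) ρ(t,r) ≥ 0 for all t, r; (ii) ρ(t,r) = 0 and V(t,r) = 0 whenever r ≥ R; (iii) for each t the map r ↦ ρ(t,r)^{γ−1} is differentiable on (0,R), and for all t ∈ [0,T] and 0 < r < R: ∂ₜV(t,r) + V(t,r)·∂ᵣV(t,r) + (Kγ/(γ−1))·∂ᵣ(ρ(t,r)^{γ−1}) = δ·α(N)·r^{1−N}·∫₀^r ρ(t,s) s^{N−1} ds. Define H(t) := ∫₀^R r^n V(t,r) dr. Then H is differentiable on [0,T] and satisfies H′(t) ≥ n(n+1)·H(t)²/(2R^{n+2}) for all t ∈ [0,T]. -/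

import Mathlib

/-- The constant `α(N)`: `α(1) = 1`, `α(2) = 2π`, and
`α(N) = N(N−2)·π^{N/2}/Γ(N/2+1)` for `N ≥ 3`. -/
noncomputable def alphaConst (N : ℕ) : ℝ :=
  if N = 1 then 1
  else if N = 2 then 2 * Real.pi
  else (N : ℝ) * ((N : ℝ) - 2) * Real.pi ^ ((N : ℝ) / 2) / Real.Gamma ((N : ℝ) / 2 + 1)

/-!
Differentiating under the integral sign and inserting the momentum equation,
`H' = -∫ rⁿ V ∂ᵣV - Kγ/(γ-1) ∫ rⁿ ∂ᵣ(ρ^{γ-1}) + ∫ rⁿ F` with a repulsive force `F ≥ 0`.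
Integrating by parts (the boundary terms vanish: `rⁿ = 0` at `r = 0`, `ρ = V = 0` at `r = R`)
turns the first two terms into `(n/2) ∫ r^{n-1} V²` and `nKγ/(γ-1) ∫ r^{n-1} ρ^{γ-1} ≥ 0`, so
`H' ≥ (n/2) ∫ r^{n-1} V²`. Cauchy–Schwarz for `rⁿ V = r^{(n+1)/2} · r^{(n-1)/2} V` gives
`(n+2) H² ≤ R^{n+2} ∫ r^{n-1} V²`, hence `H' ≥ n(n+2) H² / (2R^{n+2})`.
The momentum equation involves the two-sided time derivative, so this argument runs for
`0 < t < T`; both sides are continuous on `[0, T]`, which gives the endpoints.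
-/

open Set MeasureTheory Filter Topology Function
open scoped Interval

section ParametricIntegral

variable {E : Type*} [NormedAddCommGroup E] [NormedSpace ℝ E]

theorem hasDerivWithinAt_Icc_of_hasDerivAt_Ioo {f f' : ℝ → E} {a b x : ℝ} (hab : a < b)
    (hf : ContinuousOn f (Icc a b)) (hf' : ContinuousOn f' (Icc a b))
    (hderiv : ∀ y ∈ Ioo a b, HasDerivAt f (f' y) y) (hx : x ∈ Icc a b) :
    HasDerivWithinAt f (f' x) (Icc a b) x := by
  rw [← closure_Ioo hab.ne, hasDerivWithinAt_iff_hasFDerivWithinAt]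
  refine hasFDerivWithinAt_closure_of_tendsto_fderiv
    (fun y hy => (hderiv y hy).differentiableAt.differentiableWithinAt) (convex_Ioo a b)
    isOpen_Ioo (fun y hy => ?_) ?_
  · rw [closure_Ioo hab.ne] at hy
    exact (hf y hy).mono Ioo_subset_Icc_self
  · have hlim : Tendsto f' (𝓝[Ioo a b] x) (𝓝 (f' x)) := (hf' x hx).mono Ioo_subset_Icc_self
    refine ((ContinuousLinearMap.smulRightL ℝ ℝ E 1).continuous.tendsto _ |>.comp hlim).congr'
      (eventually_nhdsWithin_of_forall fun y hy => ?_)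
    exact (hderiv y hy).hasFDerivAt.fderiv.symm

theorem continuousOn_intervalIntegral_of_continuousOn_prod {X : Type*} [TopologicalSpace X]
    [FirstCountableTopology X] {F : X → ℝ → E} {s : Set X} {c d : ℝ} (hs : IsCompact s)
    (hcd : c ≤ d) (hF : ContinuousOn (uncurry F) (s ×ˢ Icc c d)) :
    ContinuousOn (fun x => ∫ r in c..d, F x r) s := by
  obtain ⟨M, hM⟩ := (hs.prod isCompact_Icc).exists_bound_of_continuousOn hF
  simp only [intervalIntegral.integral_of_le hcd]
  refine continuousOn_of_dominated (bound := fun _ => M) (fun x hx => ?_) (fun x hx => ?_)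
    (integrable_const M) ?_
  · exact ((hF.uncurry_left x hx).mono Ioc_subset_Icc_self).aestronglyMeasurable
      measurableSet_Ioc
  · exact (ae_restrict_mem measurableSet_Ioc).mono fun r hr =>
      hM (x, r) ⟨hx, Ioc_subset_Icc_self hr⟩
  · exact (ae_restrict_mem measurableSet_Ioc).mono fun r hr =>
      hF.uncurry_right r (Ioc_subset_Icc_self hr)

theorem hasDerivWithinAt_intervalIntegral_of_continuousOn {F F' : ℝ → ℝ → E}
    {a b c d t : ℝ} (hab : a < b) (hcd : c ≤ d)
    (hF : ContinuousOn (uncurry F) (Icc a b ×ˢ Icc c d))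
    (hF' : ContinuousOn (uncurry F') (Icc a b ×ˢ Icc c d))
    (hderiv : ∀ x ∈ Ioo a b, ∀ r ∈ Ioc c d, HasDerivAt (F · r) (F' x r) x)
    (ht : t ∈ Icc a b) :
    HasDerivWithinAt (fun x => ∫ r in c..d, F x r) (∫ r in c..d, F' t r) (Icc a b) t := by
  refine hasDerivWithinAt_Icc_of_hasDerivAt_Ioo hab
    (continuousOn_intervalIntegral_of_continuousOn_prod isCompact_Icc hcd hF)
    (continuousOn_intervalIntegral_of_continuousOn_prod isCompact_Icc hcd hF')
    (fun x hx => ?_) ht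
  obtain ⟨M, hM⟩ := (isCompact_Icc.prod isCompact_Icc).exists_bound_of_continuousOn hF'
  have hmeas : ∀ G : ℝ → ℝ → E, ContinuousOn (uncurry G) (Icc a b ×ˢ Icc c d) →
      ∀ y ∈ Icc a b, AEStronglyMeasurable (G y) (volume.restrict (Ι c d)) :=
    fun G hG y hy => by
      rw [uIoc_of_le hcd]
      exact ((hG.uncurry_left y hy).mono Ioc_subset_Icc_self).aestronglyMeasurable
        measurableSet_Ioc
  have hxI := Ioo_subset_Icc_self hx
  refine (intervalIntegral.hasDerivAt_integral_of_dominated_loc_of_deriv_le (bound := fun _ => M)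
    (Ioo_mem_nhds hx.1 hx.2) ?_ ((hF.uncurry_left x hxI).intervalIntegrable_of_Icc hcd)
    (hmeas F' hF' x hxI) ?_ intervalIntegrable_const ?_).2
  · filter_upwards [Ioo_mem_nhds hx.1 hx.2] with y hy
    exact hmeas F hF y (Ioo_subset_Icc_self hy)
  · refine Eventually.of_forall fun r hr y hy => hM (y, r) ⟨Ioo_subset_Icc_self hy, ?_⟩
    rw [uIoc_of_le hcd] at hr
    exact Ioc_subset_Icc_self hr
  · refine Eventually.of_forall fun r hr y hy => hderiv y hy r ?_
    rwa [uIoc_of_le hcd] at hr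

end ParametricIntegral

section PartialDerivatives

variable {f : ℝ → ℝ → ℝ} {s : Set (ℝ × ℝ)} {t r : ℝ}

noncomputable def fstPartialDerivWithin (f : ℝ → ℝ → ℝ) (s : Set (ℝ × ℝ)) (t r : ℝ) : ℝ :=
  fderivWithin ℝ (uncurry f) s (t, r) (1, 0)

theorem ContDiffOn.continuousOn_fstPartialDerivWithin (hf : ContDiffOn ℝ 1 (uncurry f) s)
    (hs : UniqueDiffOn ℝ s) : ContinuousOn (uncurry (fstPartialDerivWithin f s)) s :=
  (ContinuousLinearMap.apply ℝ ℝ ((1 : ℝ), (0 : ℝ))).continuous.comp_continuousOn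
    (hf.continuousOn_fderivWithin hs le_rfl)

theorem ContDiffOn.hasDerivAt_uncurry_fst (hf : ContDiffOn ℝ 1 (uncurry f) s)
    (hs : s ∈ 𝓝 (t, r)) : HasDerivAt (f · r) (fstPartialDerivWithin f s t r) t := by
  have hF : HasFDerivAt (uncurry f) (fderivWithin ℝ (uncurry f) s (t, r)) (t, r) :=
    ((hf.differentiableOn one_ne_zero) _ (mem_of_mem_nhds hs)).hasFDerivWithinAt.hasFDerivAt hs
  exact hF.comp_hasDerivAt t ((hasDerivAt_id t).prodMk (hasDerivAt_const t r))

theorem ContDiffOn.differentiableAt_uncurry_snd (hf : ContDiffOn ℝ 1 (uncurry f) s)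
    (hs : s ∈ 𝓝 (t, r)) : DifferentiableAt ℝ (f t) r :=
  ((hf.contDiffAt hs).differentiableAt one_ne_zero).comp r
    ((differentiableAt_const t).prodMk differentiableAt_id)

end PartialDerivatives

theorem sq_integral_mul_le_integral_sq_mul_integral_sq {α : Type*} [MeasurableSpace α]
    {μ : Measure α} {f g : α → ℝ} (hf : Integrable (fun x => f x ^ 2) μ)
    (hg : Integrable (fun x => g x ^ 2) μ) (hfg : Integrable (fun x => f x * g x) μ) :
    (∫ x, f x * g x ∂μ) ^ 2 ≤ (∫ x, f x ^ 2 ∂μ) * ∫ x, g x ^ 2 ∂μ := by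
  have hquad : ∀ l : ℝ,
      0 ≤ (∫ x, f x ^ 2 ∂μ) * (l * l) + (-2 * ∫ x, f x * g x ∂μ) * l + ∫ x, g x ^ 2 ∂μ :=
    fun l => by
      have h1 : Integrable (fun x => l * l * f x ^ 2 - 2 * l * (f x * g x)) μ :=
        (hf.const_mul _).sub (hfg.const_mul _)
      have hexp : ∫ x, (l * f x - g x) ^ 2 ∂μ = (∫ x, f x ^ 2 ∂μ) * (l * l)
          + (-2 * ∫ x, f x * g x ∂μ) * l + ∫ x, g x ^ 2 ∂μ := by
        rw [integral_congr_ae (g := fun x => l * l * f x ^ 2 - 2 * l * (f x * g x) + g x ^ 2)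
            (ae_of_all _ fun x => by ring), integral_add h1 hg,
          integral_sub (hf.const_mul _) (hfg.const_mul _), integral_const_mul, integral_const_mul]
        ring
      exact hexp ▸ integral_nonneg fun x => sq_nonneg _
  have := discrim_le_zero hquad
  rw [discrim] at this
  nlinarith

section RadialMoments

variable {n R : ℝ} {v : ℝ → ℝ}

theorem mul_sq_integral_rpow_mul_le (hn : 0 < n) (hR : 0 ≤ R) (hv : ContinuousOn v (Icc 0 R)) :
    (n + 2) * (∫ r in (0:ℝ)..R, r ^ n * v r) ^ 2
      ≤ R ^ (n + 2) * ∫ r in (0:ℝ)..R, r ^ (n - 1) * v r ^ 2 := by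
  have hsq : ∀ r : ℝ, 0 < r → ∀ y : ℝ, (r ^ (y / 2)) ^ 2 = r ^ y := fun r hr y => by
    rw [← Real.rpow_natCast, ← Real.rpow_mul hr.le]; norm_num
  have hf2 : EqOn (fun r => (r ^ ((n + 1) / 2)) ^ 2) (fun r => r ^ (n + 1)) (Ioc 0 R) :=
    fun r hr => hsq r hr.1 _
  have hg2 : EqOn (fun r => (r ^ ((n - 1) / 2) * v r) ^ 2) (fun r => r ^ (n - 1) * v r ^ 2)
      (Ioc 0 R) := fun r hr => by simp only [mul_pow, hsq r hr.1]
  have hfg : EqOn (fun r => r ^ ((n + 1) / 2) * (r ^ ((n - 1) / 2) * v r)) (fun r => r ^ n * v r)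
      (Ioc 0 R) := fun r hr => by
    simp only [← mul_assoc, ← Real.rpow_add hr.1]; ring_nf
  have hI : ∀ {h : ℝ → ℝ}, IntervalIntegrable h volume 0 R → IntegrableOn h (Ioc 0 R) :=
    fun hh => (intervalIntegrable_iff_integrableOn_Ioc_of_le hR).1 hh
  have hcs := sq_integral_mul_le_integral_sq_mul_integral_sq (μ := volume.restrict (Ioc 0 R))
    ((hI (intervalIntegral.intervalIntegrable_rpow' (by linarith))).congr_fun hf2.symm
      measurableSet_Ioc)
    ((hI ((intervalIntegral.intervalIntegrable_rpow' (by linarith)).mul_continuousOn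
      (by rw [uIcc_of_le hR]; exact hv.pow 2))).congr_fun hg2.symm measurableSet_Ioc)
    ((hI (((Real.continuous_rpow_const hn.le).continuousOn.mul hv).intervalIntegrable_of_Icc
      hR)).congr_fun hfg.symm measurableSet_Ioc)
  rw [setIntegral_congr_fun measurableSet_Ioc hf2, setIntegral_congr_fun measurableSet_Ioc hg2,
    setIntegral_congr_fun measurableSet_Ioc hfg, ← intervalIntegral.integral_of_le hR,
    ← intervalIntegral.integral_of_le hR, ← intervalIntegral.integral_of_le hR,
    integral_rpow (.inl (by linarith)), Real.zero_rpow (by linarith),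
    show n + 1 + 1 = n + 2 by ring] at hcs
  have hn2 : 0 < n + 2 := by linarith
  calc (n + 2) * (∫ r in (0:ℝ)..R, r ^ n * v r) ^ 2
      ≤ (n + 2) * ((R ^ (n + 2) - 0) / (n + 2) * ∫ r in (0:ℝ)..R, r ^ (n - 1) * v r ^ 2) :=
        mul_le_mul_of_nonneg_left hcs hn2.le
    _ = _ := by field_simp; ring

theorem half_mul_integral_rpow_mul_sq_le_of_momentum {c : ℝ} {a p : ℝ → ℝ} (hn : 0 < n)
    (hR : 0 ≤ R) (hc : 0 ≤ c) (hv : ContinuousOn v (Icc 0 R))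
    (hv' : ∀ r ∈ Ioo 0 R, DifferentiableAt ℝ v r) (hvR : v R = 0)
    (ha : ContinuousOn a (Icc 0 R)) (hp : ContinuousOn p (Icc 0 R))
    (hp' : ∀ r ∈ Ioo 0 R, DifferentiableAt ℝ p r) (hp0 : ∀ r ∈ Ioo 0 R, 0 ≤ p r) (hpR : p R = 0)
    (hmom : ∀ r ∈ Ioo 0 R, 0 ≤ a r + v r * deriv v r + c * deriv p r) :
    n / 2 * ∫ r in (0:ℝ)..R, r ^ (n - 1) * v r ^ 2 ≤ ∫ r in (0:ℝ)..R, r ^ n * a r := by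
  have hJ : IntervalIntegrable (fun r => r ^ (n - 1) * v r ^ 2) volume 0 R :=
    (intervalIntegral.intervalIntegrable_rpow' (by linarith)).mul_continuousOn
      (by rw [uIcc_of_le hR]; exact hv.pow 2)
  have hA : IntervalIntegrable (fun r => r ^ n * a r) volume 0 R :=
    ((Real.continuous_rpow_const hn.le).continuousOn.mul ha).intervalIntegrable_of_Icc hR
  -- integration by parts against `rⁿ (v² / 2 + c p)`, which vanishes at `0` and at `R`
  have key := intervalIntegral.integral_le_sub_of_hasDeriv_right_of_le hR
    (g := fun r => r ^ n * (v r ^ 2 / 2 + c * p r))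
    (g' := fun r => n * r ^ (n - 1) * (v r ^ 2 / 2 + c * p r)
      + r ^ n * (v r * deriv v r + c * deriv p r))
    (φ := fun r => n / 2 * (r ^ (n - 1) * v r ^ 2) - r ^ n * a r)
    ((Real.continuous_rpow_const hn.le).continuousOn.mul ((hv.pow 2).div_const 2 |>.add
      (hp.const_smul c)))
    (fun r hr => by
      have h := (Real.hasDerivAt_rpow_const (p := n) (.inl hr.1.ne')).mul
        ((((hv' r hr).hasDerivAt.pow 2).div_const 2).add ((hp' r hr).hasDerivAt.const_mul c))
      refine (h.congr_deriv ?_).hasDerivWithinAt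
      simp only [Pi.add_apply, Pi.pow_apply]
      push_cast; ring)
    ((intervalIntegrable_iff_integrableOn_Icc_of_le hR).1 ((hJ.const_mul _).sub hA))
    (fun r hr => by
      have h1 := mul_nonneg (Real.rpow_nonneg hr.1.le n) (hmom r hr)
      have h2 := mul_nonneg (mul_nonneg (mul_nonneg hn.le (Real.rpow_nonneg hr.1.le (n - 1))) hc)
        (hp0 r hr)
      nlinarith)
  rw [intervalIntegral.integral_sub (hJ.const_mul _) hA, intervalIntegral.integral_const_mul]
    at key
  simp only [hvR, hpR, Real.zero_rpow hn.ne'] at key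
  linarith

theorem riccati_ineq_of_momentum_ineq {c : ℝ} {a p : ℝ → ℝ} (hn : 0 < n) (hR : 0 < R)
    (hc : 0 ≤ c) (hv : ContinuousOn v (Icc 0 R)) (hv' : ∀ r ∈ Ioo 0 R, DifferentiableAt ℝ v r)
    (hvR : v R = 0) (ha : ContinuousOn a (Icc 0 R)) (hp : ContinuousOn p (Icc 0 R))
    (hp' : ∀ r ∈ Ioo 0 R, DifferentiableAt ℝ p r) (hp0 : ∀ r ∈ Ioo 0 R, 0 ≤ p r) (hpR : p R = 0)
    (hmom : ∀ r ∈ Ioo 0 R, 0 ≤ a r + v r * deriv v r + c * deriv p r) :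
    n * (n + 1) * (∫ r in (0:ℝ)..R, r ^ n * v r) ^ 2 / (2 * R ^ (n + 2))
      ≤ ∫ r in (0:ℝ)..R, r ^ n * a r := by
  have hcs := mul_sq_integral_rpow_mul_le hn hR.le hv
  have henergy := half_mul_integral_rpow_mul_sq_le_of_momentum hn hR.le hc hv hv' hvR ha hp hp'
    hp0 hpR hmom
  have hRn : 0 < R ^ (n + 2) := Real.rpow_pos_of_pos hR _
  rw [div_le_iff₀ (by positivity)]
  nlinarith [sq_nonneg (∫ r in (0:ℝ)..R, r ^ n * v r)]

end RadialMoments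

section TimeDerivative

variable {n R T : ℝ} {V : ℝ → ℝ → ℝ}

theorem continuousOn_rpow_mul_of_continuousOn_Icc_prod_Ici (hn : 0 < n)
    (hV : ContinuousOn (uncurry V) (Icc 0 T ×ˢ Ici 0)) :
    ContinuousOn (uncurry fun t r => r ^ n * V t r) (Icc 0 T ×ˢ Icc 0 R) :=
  ((Real.continuous_rpow_const hn.le).comp continuous_snd).continuousOn.mul
    (hV.mono (prod_mono le_rfl Icc_subset_Ici_self))

theorem continuousOn_integral_rpow_mul (hn : 0 < n) (hR : 0 ≤ R)
    (hV : ContinuousOn (uncurry V) (Icc 0 T ×ˢ Ici 0)) :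
    ContinuousOn (fun t => ∫ r in (0:ℝ)..R, r ^ n * V t r) (Icc 0 T) :=
  continuousOn_intervalIntegral_of_continuousOn_prod isCompact_Icc hR
    (continuousOn_rpow_mul_of_continuousOn_Icc_prod_Ici hn hV)

theorem hasDerivWithinAt_integral_rpow_mul (hn : 0 < n) (hR : 0 ≤ R) (hT : 0 < T)
    (hV : ContDiffOn ℝ 1 (uncurry V) (Icc 0 T ×ˢ Ici 0)) {t : ℝ} (ht : t ∈ Icc 0 T) :
    HasDerivWithinAt (fun t => ∫ r in (0:ℝ)..R, r ^ n * V t r)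
      (∫ r in (0:ℝ)..R, r ^ n * fstPartialDerivWithin V (Icc 0 T ×ˢ Ici 0) t r) (Icc 0 T) t :=
  hasDerivWithinAt_intervalIntegral_of_continuousOn hT hR
    (continuousOn_rpow_mul_of_continuousOn_Icc_prod_Ici hn hV.continuousOn)
    (continuousOn_rpow_mul_of_continuousOn_Icc_prod_Ici hn
      (hV.continuousOn_fstPartialDerivWithin ((uniqueDiffOn_Icc hT).prod (uniqueDiffOn_Ici 0))))
    (fun _ ht _ hr => (hV.hasDerivAt_uncurry_fst
      (prod_mem_nhds (Icc_mem_nhds ht.1 ht.2) (Ici_mem_nhds hr.1))).const_mul _) ht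

end TimeDerivative

theorem alphaConst_nonneg (N : ℕ) : 0 ≤ alphaConst N := by
  unfold alphaConst
  split_ifs
  · exact zero_le_one
  · positivity
  · rcases Nat.lt_or_ge N 3 with hN | hN
    · interval_cases N <;> simp_all
    · have hN' : (3 : ℝ) ≤ N := by exact_mod_cast hN
      have hΓ := Real.Gamma_pos_of_pos (by positivity : (0 : ℝ) < N / 2 + 1)
      exact div_nonneg (mul_nonneg (mul_nonneg (by positivity) (by linarith)) (by positivity))
        hΓ.le

theorem repulsive_force_nonneg {δ r : ℝ} {ρ : ℝ → ℝ} (N : ℕ) (hδ : 0 ≤ δ) (hr : 0 ≤ r)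
    (hρ : ∀ s, 0 ≤ ρ s) :
    0 ≤ δ * alphaConst N * r ^ ((1:ℝ) - N) * ∫ s in (0:ℝ)..r, ρ s * s ^ (N - 1) :=
  mul_nonneg (mul_nonneg (mul_nonneg hδ (alphaConst_nonneg N)) (Real.rpow_nonneg hr _))
    (intervalIntegral.integral_nonneg hr fun s hs => mul_nonneg (hρ s) (pow_nonneg hs.1 _))

theorem riccati_inequality_repulsive_general
    (N : ℕ) (n R K γ T δ : ℝ)
    (hn : 0 < n) (hR : 0 < R) (hK : 0 ≤ K) (hγ : 1 < γ) (hT : 0 < T)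
    (hδ : δ = 0 ∨ δ = 1)
    (ρ V : ℝ → ℝ → ℝ)
    (hρC1 : ContDiffOn ℝ 1 (Function.uncurry ρ) (Set.Icc 0 T ×ˢ Set.Ici 0))
    (hVC1 : ContDiffOn ℝ 1 (Function.uncurry V) (Set.Icc 0 T ×ˢ Set.Ici 0))
    (hρnn : ∀ t r, 0 ≤ ρ t r)
    (hsupp : ∀ t r, R ≤ r → ρ t r = 0 ∧ V t r = 0)
    (hdiffp : ∀ t ∈ Set.Icc (0:ℝ) T, ∀ r ∈ Set.Ioo (0:ℝ) R,
      DifferentiableAt ℝ (fun s => ρ t s ^ (γ - 1)) r)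
    (hmom : ∀ t ∈ Set.Icc (0:ℝ) T, ∀ r ∈ Set.Ioo (0:ℝ) R,
      deriv (fun τ => V τ r) t + V t r * deriv (fun s => V t s) r
        + (K * γ / (γ - 1)) * deriv (fun s => ρ t s ^ (γ - 1)) r
      = δ * alphaConst N * r ^ ((1:ℝ) - N) * ∫ s in (0:ℝ)..r, ρ t s * s ^ (N - 1)) :
    DifferentiableOn ℝ (fun t => ∫ r in (0:ℝ)..R, r ^ n * V t r) (Set.Icc 0 T) ∧
    ∀ t ∈ Set.Icc (0:ℝ) T,
      n * (n + 1) * (∫ r in (0:ℝ)..R, r ^ n * V t r) ^ 2 / (2 * R ^ (n + 2))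
      ≤ derivWithin (fun t => ∫ r in (0:ℝ)..R, r ^ n * V t r) (Set.Icc 0 T) t := by
  set S : Set (ℝ × ℝ) := Icc 0 T ×ˢ Ici 0
  have hSnhds : ∀ t ∈ Ioo 0 T, ∀ r ∈ Ioo 0 R, S ∈ 𝓝 (t, r) := fun t ht r hr =>
    prod_mem_nhds (Icc_mem_nhds ht.1 ht.2) (Ici_mem_nhds hr.1)
  have hW := hVC1.continuousOn_fstPartialDerivWithin
    ((uniqueDiffOn_Icc hT).prod (uniqueDiffOn_Ici 0))
  have hH := fun t (ht : t ∈ Icc 0 T) => hasDerivWithinAt_integral_rpow_mul hn hR.le hT hVC1 ht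
  refine ⟨fun t ht => (hH t ht).differentiableWithinAt, fun t ht => ?_⟩
  rw [(hH t ht).derivWithin (uniqueDiffOn_Icc hT t ht)]
  have hHc := continuousOn_integral_rpow_mul (R := R) hn hR.le hVC1.continuousOn
  have hWc := continuousOn_integral_rpow_mul (R := R) hn hR.le hW
  rw [← closure_Ioo hT.ne] at hHc hWc ht
  refine le_on_closure (fun t ht => ?_) ((continuousOn_const.mul (hHc.pow 2)).div_const _) hWc ht
  have htI := Ioo_subset_Icc_self ht
  have hslice : ∀ {F : ℝ → ℝ → ℝ}, ContinuousOn (uncurry F) S → ContinuousOn (F t) (Icc 0 R) :=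
    fun hF => (hF.mono (prod_mono le_rfl Icc_subset_Ici_self)).uncurry_left t htI
  refine riccati_ineq_of_momentum_ineq (c := K * γ / (γ - 1)) hn hR
    (div_nonneg (mul_nonneg hK (by linarith)) (by linarith)) (hslice hVC1.continuousOn)
    (fun r hr => hVC1.differentiableAt_uncurry_snd (hSnhds t ht r hr)) (hsupp t R le_rfl).2
    (hslice hW) ((hslice hρC1.continuousOn).rpow_const fun _ _ => .inr (by linarith))
    (hdiffp t htI) (fun r _ => Real.rpow_nonneg (hρnn t r) _)
    (by rw [(hsupp t R le_rfl).1, Real.zero_rpow (by linarith)]) fun r hr => ?_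
  have h := hmom t htI r hr
  rw [(hVC1.hasDerivAt_uncurry_fst (hSnhds t ht r hr)).deriv] at h
  have hδ0 : 0 ≤ δ := by rcases hδ with hδ | hδ <;> simp [hδ]
  linarith [repulsive_force_nonneg N hδ0 hr.1.le (hρnn t)]

/-- For a radially symmetric `C¹` solution of the Euler (`δ = 0`) or repulsive
Euler–Poisson (`δ = 1`) equations, compactly supported in `[0,R]`, the functional
`H(t) = ∫₀^R rⁿ V(t,r) dr` is differentiable on `[0,T]` and satisfies the Riccati
differential inequality `H′(t) ≥ n(n+1)H(t)²/(2R^{n+2})`. -/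
theorem riccati_inequality_repulsive
    (N : ℕ) (hN : 1 ≤ N) (n R K γ T δ : ℝ)
    (hn : 0 < n) (hR : 0 < R) (hK : 0 ≤ K) (hγ : 1 < γ) (hT : 0 < T)
    (hδ : δ = 0 ∨ δ = 1)
    (ρ V : ℝ → ℝ → ℝ)
    (hρC1 : ContDiffOn ℝ 1 (Function.uncurry ρ) (Set.Icc 0 T ×ˢ Set.Ici 0))
    (hVC1 : ContDiffOn ℝ 1 (Function.uncurry V) (Set.Icc 0 T ×ˢ Set.Ici 0))
    (hρnn : ∀ t r, 0 ≤ ρ t r)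
    (hsupp : ∀ t r, R ≤ r → ρ t r = 0 ∧ V t r = 0)
    (hdiffp : ∀ t ∈ Set.Icc (0:ℝ) T, ∀ r ∈ Set.Ioo (0:ℝ) R,
      DifferentiableAt ℝ (fun s => ρ t s ^ (γ - 1)) r)
    (hmom : ∀ t ∈ Set.Icc (0:ℝ) T, ∀ r ∈ Set.Ioo (0:ℝ) R,
      deriv (fun τ => V τ r) t + V t r * deriv (fun s => V t s) r
        + (K * γ / (γ - 1)) * deriv (fun s => ρ t s ^ (γ - 1)) r
      = δ * alphaConst N * r ^ ((1:ℝ) - N) * ∫ s in (0:ℝ)..r, ρ t s * s ^ (N - 1)) :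
    DifferentiableOn ℝ (fun t => ∫ r in (0:ℝ)..R, r ^ n * V t r) (Set.Icc 0 T) ∧
    ∀ t ∈ Set.Icc (0:ℝ) T,
      n * (n + 1) * (∫ r in (0:ℝ)..R, r ^ n * V t r) ^ 2 / (2 * R ^ (n + 2))
      ≤ derivWithin (fun t => ∫ r in (0:ℝ)..R, r ^ n * V t r) (Set.Icc 0 T) t :=
  riccati_inequality_repulsive_general N n R K γ T δ hn hR hK hγ hT hδ ρ V hρC1 hVC1 hρnn hsupp
    hdiffp hmom
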